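/- arXiv:2208.10627 — 2 statements merged into one kernel-verified Lean document; each statement's English description precedes it below -/
import Mathlib

section
/- For any real number b with b² ≤ 1 and any σ² > 0, b² ≤ ln(1 + b²/σ²) / ln(1 + 1/σ²). -/
/-- For any real `b` with `b² ≤ 1` and any `σ² > 0`,
`b² ≤ ln(1 + b²/σ²) / ln(1 + 1/σ²)`. -/
theorem sq_le_log_ratio (b σ : ℝ) (hσ : 0 < σ ^ 2) (hb : b ^ 2 ≤ 1) :
    b ^ 2 ≤ Real.log (1 + b ^ 2 / σ ^ 2) / Real.log (1 + 1 / σ ^ 2) := by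
  have h1 : (0:ℝ) < 1 / σ ^ 2 := by positivity
  have hlog : 0 < Real.log (1 + 1 / σ ^ 2) := Real.log_pos (by linarith)
  rw [le_div_iff₀ hlog]
  have hbern : (1 + 1 / σ ^ 2) ^ (b ^ 2) ≤ 1 + b ^ 2 * (1 / σ ^ 2) :=
    rpow_one_add_le_one_add_mul_self (by linarith) (sq_nonneg b) hb
  have := Real.log_le_log (by positivity) hbern
  rwa [Real.log_rpow (by linarith), mul_one_div] at this
end

section
/- Let Σ_M⁻¹ = I + (1/σ²) Σ_{m=1}^{M} v_m v_mᵀ where each v_m ∈ ℝⁿ satisfies ‖v_m‖ ≤ 1 and σ > 0. Then det(Σ_M⁻¹) ≤ (1 + M/(n σ²))ⁿ. -/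
open Matrix Finset

/-! The matrix is positive semidefinite with trace `n + σ⁻² ∑ ‖v_m‖² ≤ n + M / σ²`, and AM–GM
applied to its eigenvalues bounds the determinant by `(trace / n) ^ n`. -/

theorem Real.prod_le_sum_div_card_pow {ι : Type*} (s : Finset ι) (z : ι → ℝ)
    (hz : ∀ i ∈ s, 0 ≤ z i) : ∏ i ∈ s, z i ≤ ((∑ i ∈ s, z i) / #s) ^ #s := by
  obtain rfl | hs := s.eq_empty_or_nonempty
  · simp
  have hcard : (0 : ℝ) < #s := by exact_mod_cast hs.card_pos
  have hP : 0 ≤ ∏ i ∈ s, z i := prod_nonneg hz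
  have amgm : (∏ i ∈ s, z i) ^ (#s : ℝ)⁻¹ ≤ (∑ i ∈ s, z i) / #s := by
    have := Real.geom_mean_le_arith_mean_weighted s (fun _ ↦ (#s : ℝ)⁻¹) z
      (fun _ _ ↦ by positivity) (by simp [hcard.ne']) hz
    rwa [Real.finsetProd_rpow _ _ hz, ← mul_sum, inv_mul_eq_div] at this
  calc ∏ i ∈ s, z i = ((∏ i ∈ s, z i) ^ (#s : ℝ)⁻¹) ^ #s := by
        rw [← Real.rpow_natCast, ← Real.rpow_mul hP, inv_mul_cancel₀ hcard.ne', Real.rpow_one]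
    _ ≤ ((∑ i ∈ s, z i) / #s) ^ #s := by gcongr

theorem Matrix.PosSemidef.det_le_trace_div_card_pow {ι : Type*} [Fintype ι] [DecidableEq ι]
    {A : Matrix ι ι ℝ} (hA : A.PosSemidef) :
    A.det ≤ (A.trace / Fintype.card ι) ^ Fintype.card ι := by
  have hdet : A.det = ∏ i, hA.isHermitian.eigenvalues i := by
    simpa using hA.isHermitian.det_eq_prod_eigenvalues
  have htrace : A.trace = ∑ i, hA.isHermitian.eigenvalues i := by
    simpa using hA.isHermitian.trace_eq_sum_eigenvalues
  rw [hdet, htrace]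
  exact Real.prod_le_sum_div_card_pow univ _ fun i _ ↦ hA.eigenvalues_nonneg i

theorem Matrix.trace_one_add_smul_sum_vecMulVec_self {ι κ : Type*} [Fintype ι] [DecidableEq ι]
    (c : ℝ) (s : Finset κ) (v : κ → ι → ℝ) :
    (1 + c • ∑ m ∈ s, vecMulVec (v m) (v m)).trace =
      Fintype.card ι + c * ∑ m ∈ s, ∑ i, v m i ^ 2 := by
  simp [trace_sum, dotProduct, sq]

theorem det_bound_rank_one_sum_general {n : ℕ} (σ : ℝ)
    (M : ℕ) (v : ℕ → (Fin n → ℝ))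
    (hv : ∀ m, Real.sqrt (∑ i, (v m i) ^ 2) ≤ 1) :
    ((1 : Matrix (Fin n) (Fin n) ℝ) +
        (σ ^ 2)⁻¹ • ∑ m ∈ Finset.range M, vecMulVec (v m) (v m)).det ≤
      (1 + (M : ℝ) / (n * σ ^ 2)) ^ n := by
  obtain rfl | hn := n.eq_zero_or_pos
  · simp
  set A := (1 : Matrix (Fin n) (Fin n) ℝ) +
    (σ ^ 2)⁻¹ • ∑ m ∈ Finset.range M, vecMulVec (v m) (v m)
  have hA : A.PosSemidef := PosSemidef.one.add <| PosSemidef.smul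
    (posSemidef_sum _ fun m _ ↦ by simpa using posSemidef_vecMulVec_self_star (v m))
    (by positivity)
  have htrace : A.trace ≤ n + (σ ^ 2)⁻¹ * M := by
    rw [trace_one_add_smul_sum_vecMulVec_self, Fintype.card_fin]
    gcongr
    calc ∑ m ∈ range M, ∑ i, v m i ^ 2 ≤ ∑ m ∈ range M, 1 :=
          sum_le_sum fun m _ ↦ Real.sqrt_le_one.mp (hv m)
      _ = M := by simp
  have hn' : (0 : ℝ) < n := by exact_mod_cast hn
  calc A.det ≤ (A.trace / n) ^ n := by simpa using hA.det_le_trace_div_card_pow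
    _ ≤ (1 + (M : ℝ) / (n * σ ^ 2)) ^ n := by
      gcongr
      · exact div_nonneg (by simpa using hA.trace_nonneg) hn'.le
      · rw [div_le_iff₀ hn', add_mul, one_mul, mul_comm (n : ℝ), ← div_div,
          div_mul_cancel₀ _ hn'.ne', div_eq_inv_mul]
        exact htrace

/-- If `Σ_M⁻¹ = I + (1/σ²) Σ_m v_m v_mᵀ` with each `‖v_m‖ ≤ 1` (Euclidean norm) and `σ > 0`,
then `det (Σ_M⁻¹) ≤ (1 + M/(n σ²))ⁿ`. -/
theorem det_bound_rank_one_sum {n : ℕ} (hn : 0 < n) (σ : ℝ) (hσ : 0 < σ)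
    (M : ℕ) (v : ℕ → (Fin n → ℝ))
    (hv : ∀ m, Real.sqrt (∑ i, (v m i) ^ 2) ≤ 1) :
    ((1 : Matrix (Fin n) (Fin n) ℝ) +
        (σ ^ 2)⁻¹ • ∑ m ∈ Finset.range M, vecMulVec (v m) (v m)).det ≤
      (1 + (M : ℝ) / (n * σ ^ 2)) ^ n :=
  det_bound_rank_one_sum_general σ M v hv
end
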